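/- Let A be a Büchi automaton, and let A' be the Büchi automaton with the same states, initial state and transitions as A, whose significant transitions are the significant transitions of A together with every non-significant transition of A that does not lie on a cycle consisting only of non-significant transitions of A. Then L(A') = L(A), and A' is normal. -/

import Mathlib

/-- A (nondeterministic) Büchi/coBüchi automaton: an initial state, a set of
transitions, and a subset of *significant* transitions. -/
structure BuchiAutomaton (σ : Type) (Q : Type) where
  init : Q
  trans : Set (Q × σ × Q)
  sig : Set (Q × σ × Q)
  sig_sub : sig ⊆ trans

namespace BuchiAutomaton

variable {σ Q : Type}

/-- `ρ` is a run of `A` on the infinite word `w`, starting at the state `p`. -/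
def IsRunFrom (A : BuchiAutomaton σ Q) (p : Q) (w : ℕ → σ) (ρ : ℕ → Q) : Prop :=
  ρ 0 = p ∧ ∀ i, (ρ i, w i, ρ (i + 1)) ∈ A.trans

/-- Büchi acceptance: the run contains infinitely many significant transitions. -/
def BuchiAcc (A : BuchiAutomaton σ Q) (w : ℕ → σ) (ρ : ℕ → Q) : Prop :=
  ∀ N, ∃ i, N ≤ i ∧ (ρ i, w i, ρ (i + 1)) ∈ A.sig

/-- coBüchi acceptance: the run contains finitely many significant transitions. -/
def CoBuchiAcc (A : BuchiAutomaton σ Q) (w : ℕ → σ) (ρ : ℕ → Q) : Prop :=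
  ∃ N, ∀ i, N ≤ i → (ρ i, w i, ρ (i + 1)) ∉ A.sig

/-- The language of `A` (as a Büchi automaton), with initial state `p`. -/
def LangFrom (A : BuchiAutomaton σ Q) (p : Q) : Set (ℕ → σ) :=
  {w | ∃ ρ, A.IsRunFrom p w ρ ∧ A.BuchiAcc w ρ}

/-- The language of `A`, read as a Büchi automaton. -/
def Lang (A : BuchiAutomaton σ Q) : Set (ℕ → σ) :=
  A.LangFrom A.init

/-- The language of `A`, read as a coBüchi automaton. -/
def CoLang (A : BuchiAutomaton σ Q) : Set (ℕ → σ) :=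
  {w | ∃ ρ, A.IsRunFrom A.init w ρ ∧ A.CoBuchiAcc w ρ}

/-- `A` is deterministic: at most one outgoing transition per state and letter. -/
def Deterministic (A : BuchiAutomaton σ Q) : Prop :=
  ∀ p a q q', (p, a, q) ∈ A.trans → (p, a, q') ∈ A.trans → q = q'

/-- `FinRun A l p`: `l` is a finite run of `A` from the initial state, ending in
the state `p` (represented as the chronological list of its transitions). -/
inductive FinRun (A : BuchiAutomaton σ Q) : List (Q × σ × Q) → Q → Prop
  | nil : FinRun A [] A.init
  | snoc {l : List (Q × σ × Q)} {p : Q} {a : σ} {q : Q} :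
      FinRun A l p → (p, a, q) ∈ A.trans → FinRun A (l ++ [(p, a, q)]) q

/-- A resolver for `A`: a function from finite runs and letters to transitions,
such that on every finite run from the initial state ending in a state `p` and
every letter `a`, it outputs a transition on `a` with source `p`. -/
structure Resolver (A : BuchiAutomaton σ Q) where
  res : List (Q × σ × Q) → σ → Q × σ × Q
  res_valid : ∀ l p a, A.FinRun l p →
    (res l a).1 = p ∧ (res l a).2.1 = a ∧ res l a ∈ A.trans

/-- The history (finite run) built by a resolver after reading `n` letters of `w`. -/
def Resolver.hist {A : BuchiAutomaton σ Q} (r : Resolver A) (w : ℕ → σ) : ℕ → List (Q × σ × Q)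
  | 0 => []
  | n + 1 => r.hist w n ++ [r.res (r.hist w n) (w n)]

/-- The run induced by the resolver on `w` satisfies the Büchi condition. -/
def Resolver.InducedBuchiAcc {A : BuchiAutomaton σ Q} (r : Resolver A) (w : ℕ → σ) : Prop :=
  ∀ N, ∃ n, N ≤ n ∧ r.res (r.hist w n) (w n) ∈ A.sig

/-- The run induced by the resolver on `w` satisfies the coBüchi condition. -/
def Resolver.InducedCoBuchiAcc {A : BuchiAutomaton σ Q} (r : Resolver A) (w : ℕ → σ) : Prop :=
  ∃ N, ∀ n, N ≤ n → r.res (r.hist w n) (w n) ∉ A.sig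

/-- `A` is history-deterministic (as a Büchi automaton). -/
def HistoryDeterministic (A : BuchiAutomaton σ Q) : Prop :=
  ∃ r : Resolver A, ∀ w ∈ A.Lang, r.InducedBuchiAcc w

/-- `A` is history-deterministic (as a coBüchi automaton). -/
def CoHistoryDeterministic (A : BuchiAutomaton σ Q) : Prop :=
  ∃ r : Resolver A, ∀ w ∈ A.CoLang, r.InducedCoBuchiAcc w

end BuchiAutomaton

namespace BuchiAutomaton

variable {σ Q : Type}

/-- The automaton `A` with its initial state replaced by `p`. -/
def withInit (A : BuchiAutomaton σ Q) (p : Q) : BuchiAutomaton σ Q :=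
  ⟨p, A.trans, A.sig, A.sig_sub⟩

/-- The reachability automaton `reach A`: a fresh state `⊤` (here `none`) with a
significant self-loop on every letter is added, and every significant transition
`(p, a, q)` of `A` is replaced by the significant transition `(p, a, ⊤)`. -/
def reach (A : BuchiAutomaton σ Q) : BuchiAutomaton σ (Option Q) where
  init := some A.init
  trans := {t | (∃ p a q, t = (some p, a, some q) ∧ (p, a, q) ∈ A.trans ∧ (p, a, q) ∉ A.sig) ∨
                (∃ p a q, t = (some p, a, none) ∧ (p, a, q) ∈ A.sig) ∨
                (∃ a, t = (none, a, none))}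
  sig := {t | (∃ p a q, t = (some p, a, none) ∧ (p, a, q) ∈ A.sig) ∨ (∃ a, t = (none, a, none))}
  sig_sub := fun _ ht => ht.elim (fun h => Or.inr (Or.inl h)) (fun h => Or.inr (Or.inr h))

/-- One-step reachability (by some transition) between states. -/
def Step (A : BuchiAutomaton σ Q) (p q : Q) : Prop := ∃ a, (p, a, q) ∈ A.trans

/-- A state `q` of `A` is *good* if every state reachable from `q` in `reach A`
has at most one outgoing transition on each letter. -/
def GoodState (A : BuchiAutomaton σ Q) (q : Q) : Prop :=
  ∀ s, Relation.ReflTransGen A.reach.Step (some q) s →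
    ∀ a s₁ s₂, (s, a, s₁) ∈ A.reach.trans → (s, a, s₂) ∈ A.reach.trans → s₁ = s₂

section Simulation

variable {QA QB : Type}

/-- The first `n` moves of `ta` form a legal sequence of transitions of `A`
starting at the initial state of `A`. -/
def AdamLegal (A : BuchiAutomaton σ QA) (ta : ℕ → QA × σ × QA) (n : ℕ) : Prop :=
  (∀ i < n, ta i ∈ A.trans) ∧ (0 < n → (ta 0).1 = A.init) ∧
    ∀ i, i + 1 < n → (ta (i + 1)).1 = (ta i).2.2

/-- The history of the simulation game after `n` rounds, when Adam plays the
transitions `ta` and Eve plays according to the strategy `f`. -/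
def simHist (f : List ((QA × σ × QA) × (QB × σ × QB)) → (QA × σ × QA) → QB × σ × QB)
    (ta : ℕ → QA × σ × QA) : ℕ → List ((QA × σ × QA) × (QB × σ × QB))
  | 0 => []
  | n + 1 => simHist f ta n ++ [(ta n, f (simHist f ta n) (ta n))]

/-- Eve's move in round `n` when playing according to strategy `f` against `ta`. -/
def eveMove (f : List ((QA × σ × QA) × (QB × σ × QB)) → (QA × σ × QA) → QB × σ × QB)
    (ta : ℕ → QA × σ × QA) (n : ℕ) : QB × σ × QB :=
  f (simHist f ta n) (ta n)

/-- `B` simulates `A`: Eve has a strategy in the simulation game such that her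
moves are always legal (matching Adam's letters and forming a run of `B` from its
initial state) as long as Adam's moves have been legal, and such that on every
infinite play in which Adam builds a run of `A`, either Eve's run is accepting or
Adam's run is not accepting. -/
def Simulates (B : BuchiAutomaton σ QB) (A : BuchiAutomaton σ QA) : Prop :=
  ∃ f : List ((QA × σ × QA) × (QB × σ × QB)) → (QA × σ × QA) → QB × σ × QB,
    (∀ ta n, AdamLegal A ta n →
      (∀ i < n, eveMove f ta i ∈ B.trans ∧ (eveMove f ta i).2.1 = (ta i).2.1) ∧
      (0 < n → (eveMove f ta 0).1 = B.init) ∧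
      (∀ i, i + 1 < n → (eveMove f ta (i + 1)).1 = (eveMove f ta i).2.2)) ∧
    ∀ ta, (∀ n, AdamLegal A ta n) →
      ((∀ N, ∃ i, N ≤ i ∧ eveMove f ta i ∈ B.sig) ∨ ¬ (∀ N, ∃ i, N ≤ i ∧ ta i ∈ A.sig))

end Simulation

/-- `A` is semantically deterministic. -/
def SemanticallyDeterministic (A : BuchiAutomaton σ Q) : Prop :=
  ∀ p q a p' q', A.LangFrom p = A.LangFrom q →
    (p, a, p') ∈ A.trans → (q, a, q') ∈ A.trans → A.LangFrom p' = A.LangFrom q'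

/-- One step along a non-significant transition. -/
def NonsigStep (A : BuchiAutomaton σ Q) (p q : Q) : Prop :=
  ∃ a, (p, a, q) ∈ A.trans ∧ (p, a, q) ∉ A.sig

/-- `A` is normal: every non-significant transition lies on a cycle consisting
only of non-significant transitions. -/
def Normal (A : BuchiAutomaton σ Q) : Prop :=
  ∀ t ∈ A.trans, t ∉ A.sig → Relation.ReflTransGen A.NonsigStep t.2.2 t.1

/-- `A` has reach-covering: every state `p` admits a language-equivalent good
state `q` such that `(reach A, p)` simulates `(reach A, q)`. -/
def ReachCovering (A : BuchiAutomaton σ Q) : Prop :=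
  ∀ p : Q, ∃ q : Q, A.GoodState q ∧ A.LangFrom p = A.LangFrom q ∧
    Simulates (A.reach.withInit (some p)) (A.reach.withInit (some q))

/-- `A` is simplified. -/
def Simplified (A : BuchiAutomaton σ Q) : Prop :=
  A.SemanticallyDeterministic ∧ A.Normal ∧ A.ReachCovering

end BuchiAutomaton

namespace BuchiAutomaton

/-- The normalisation of `A`: the same automaton, except that every
non-significant transition of `A` that does not lie on a cycle consisting only
of non-significant transitions of `A` is made significant. -/
def normalize {σ Q : Type} (A : BuchiAutomaton σ Q) : BuchiAutomaton σ Q where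
  init := A.init
  trans := A.trans
  sig := A.sig ∪ {t | t ∈ A.trans ∧ t ∉ A.sig ∧ ¬ Relation.ReflTransGen A.NonsigStep t.2.2 t.1}
  sig_sub := fun t ht => ht.elim (fun h => A.sig_sub h) (fun h => h.1)

end BuchiAutomaton


/-!
A run of `A.normalize` with infinitely many significant transitions also has infinitely many
in `A`: otherwise it is eventually non-significant in `A`, and then, since some state recurs
infinitely often, every later transition lies on a non-significant cycle of `A`, so none of
them was made significant. Conversely a non-significant transition of `A.normalize` lies on a
non-significant cycle of `A`, and every transition of that cycle stays non-significant in
`A.normalize` because it lies on the same cycle.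
-/

open Filter Relation

namespace BuchiAutomaton

variable {σ Q : Type} {A : BuchiAutomaton σ Q} {w : ℕ → σ} {ρ : ℕ → Q}

theorem BuchiAcc.mono {B : BuchiAutomaton σ Q} (hsig : A.sig ⊆ B.sig) (h : A.BuchiAcc w ρ) :
    B.BuchiAcc w ρ :=
  fun N => (h N).imp fun _ hi => ⟨hi.1, hsig hi.2⟩

theorem sig_subset_normalize_sig (A : BuchiAutomaton σ Q) : A.sig ⊆ A.normalize.sig :=
  Set.subset_union_left

theorem notMem_normalize_sig_iff {t : Q × σ × Q} (ht : t ∈ A.trans) :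
    t ∉ A.normalize.sig ↔ t ∉ A.sig ∧ ReflTransGen A.NonsigStep t.2.2 t.1 := by
  simp only [normalize, Set.mem_union, Set.mem_ofPred_eq]
  tauto

theorem reflTransGen_nonsigStep_of_run (htr : ∀ i, (ρ i, w i, ρ (i + 1)) ∈ A.trans) {m n : ℕ}
    (hns : ∀ i, m ≤ i → (ρ i, w i, ρ (i + 1)) ∉ A.sig) (hmn : m ≤ n) :
    ReflTransGen A.NonsigStep (ρ m) (ρ n) := by
  induction n, hmn using Nat.le_induction with
  | base => exact .refl
  | succ n hmn ih => exact ih.tail ⟨w n, htr n, hns n hmn⟩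

theorem CoBuchiAcc.eventually_reflTransGen_nonsigStep [Finite Q]
    (htr : ∀ i, (ρ i, w i, ρ (i + 1)) ∈ A.trans) (hco : A.CoBuchiAcc w ρ) :
    ∀ᶠ i in atTop, ReflTransGen A.NonsigStep (ρ (i + 1)) (ρ i) := by
  obtain ⟨N, hN⟩ := hco
  have path {m n : ℕ} (hm : N ≤ m) (hmn : m ≤ n) : ReflTransGen A.NonsigStep (ρ m) (ρ n) :=
    reflTransGen_nonsigStep_of_run htr (fun i hi => hN i (hm.trans hi)) hmn
  obtain ⟨q, hq⟩ : ∃ q, ∃ᶠ n in atTop, ρ n = q :=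
    frequently_exists.mp (.of_forall fun n => ⟨ρ n, rfl⟩)
  obtain ⟨M, hNM, hMq⟩ := frequently_atTop.mp hq N
  filter_upwards [eventually_ge_atTop M] with i hMi
  obtain ⟨k, hik, hkq⟩ := frequently_atTop.mp hq (i + 1)
  have hback : ReflTransGen A.NonsigStep (ρ k) (ρ i) := hkq ▸ hMq ▸ path hNM hMi
  exact (path (hNM.trans (hMi.trans i.le_succ)) hik).trans hback

theorem BuchiAcc.of_normalize [Finite Q] (htr : ∀ i, (ρ i, w i, ρ (i + 1)) ∈ A.trans)
    (h : A.normalize.BuchiAcc w ρ) : A.BuchiAcc w ρ := by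
  by_contra hA
  have hco : A.CoBuchiAcc w ρ := by
    simpa only [BuchiAcc, CoBuchiAcc, not_forall, not_exists, not_and] using hA
  obtain ⟨M, hM⟩ := eventually_atTop.mp
    ((eventually_atTop.mpr hco).and (hco.eventually_reflTransGen_nonsigStep htr))
  obtain ⟨i, hMi, hsig⟩ := h M
  exact (notMem_normalize_sig_iff (htr i)).mpr (hM i hMi) hsig

theorem normalize_lang [Finite Q] (A : BuchiAutomaton σ Q) : A.normalize.Lang = A.Lang := by
  ext w
  constructor
  · rintro ⟨ρ, hrun, hacc⟩
    exact ⟨ρ, hrun, hacc.of_normalize hrun.2⟩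
  · rintro ⟨ρ, hrun, hacc⟩
    exact ⟨ρ, hrun, hacc.mono A.sig_subset_normalize_sig⟩

theorem reflTransGen_normalize_nonsigStep {p r : Q} (hpr : ReflTransGen A.NonsigStep p r)
    (hrp : ReflTransGen A.NonsigStep r p) : ReflTransGen A.normalize.NonsigStep p r := by
  induction hpr with
  | refl => exact .refl
  | @tail b c hpb hbc ih =>
    obtain ⟨a, htr, hns⟩ := hbc
    have hcyc : ReflTransGen A.NonsigStep c b := hrp.trans hpb
    exact (ih (.head ⟨a, htr, hns⟩ hrp)).tail
      ⟨a, htr, (notMem_normalize_sig_iff htr).mpr ⟨hns, hcyc⟩⟩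

theorem normal_normalize (A : BuchiAutomaton σ Q) : A.normalize.Normal := by
  intro t ht hts
  obtain ⟨hns, hcyc⟩ := (notMem_normalize_sig_iff (A := A) ht).mp hts
  exact reflTransGen_normalize_nonsigStep hcyc (.single ⟨t.2.1, ht, hns⟩)

end BuchiAutomaton

theorem normalize_lang_eq_and_normal_general {σ Q : Type} [Finite Q]
    (A : BuchiAutomaton σ Q) :
    A.normalize.Lang = A.Lang ∧ A.normalize.Normal :=
  ⟨A.normalize_lang, A.normal_normalize⟩

/-- Making significant all non-significant transitions that do
not lie on a non-significant cycle preserves the language, and the resulting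
automaton is normal. -/
theorem normalize_lang_eq_and_normal {σ Q : Type} [Finite σ] [Finite Q]
    (A : BuchiAutomaton σ Q) :
    A.normalize.Lang = A.Lang ∧ A.normalize.Normal :=
  normalize_lang_eq_and_normal_general A
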